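/- arXiv:1408.5660 — 3 statements merged into one kernel-verified Lean document; each statement's English description precedes it below -/
import Mathlib

section
/- Let α be irrational, k large, r₁ ≥ 1, and let (q,p) with 0 < q ≤ 4k^{r₁} be the best approximation of α as above, ε_q := α + p/q. Then the number of vectors p_m = 2π(s₁ + α s₂), with |||p_m||| < 2k^{r₁}, satisfying |p_m| < |ε_q| q k^{r₁/3}, does not exceed k^{2r₁/3}. -/
/-- The lattice vector `p_m = 2π(s₁ + α s₂) ∈ ℝ²`, viewed as a complex number. -/
noncomputable def latticeVec (α : ℝ) (s : (ℤ × ℤ) × (ℤ × ℤ)) : ℂ :=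
  2 * (Real.pi : ℂ) *
    (((s.1.1 : ℂ) + (α : ℂ) * (s.2.1 : ℂ)) + ((s.1.2 : ℂ) + (α : ℂ) * (s.2.2 : ℂ)) * Complex.I)

/-- The norm `|||p_m||| = |s₁| + |s₂|`. -/
noncomputable def latticeNorm (s : (ℤ × ℤ) × (ℤ × ℤ)) : ℝ :=
  max |(s.1.1 : ℝ)| |(s.1.2 : ℝ)| + max |(s.2.1 : ℝ)| |(s.2.2 : ℝ)|

lemma latticeVec_re (α : ℝ) (s : (ℤ × ℤ) × (ℤ × ℤ)) :
    (latticeVec α s).re = 2 * Real.pi * ((s.1.1 : ℝ) + α * (s.2.1 : ℝ)) := by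
  simp [latticeVec, Complex.ext_iff]

lemma latticeVec_im (α : ℝ) (s : (ℤ × ℤ) × (ℤ × ℤ)) :
    (latticeVec α s).im = 2 * Real.pi * ((s.1.2 : ℝ) + α * (s.2.2 : ℝ)) := by
  simp [latticeVec, Complex.ext_iff]

lemma floor_eq_dist {x y c : ℝ} (hc : 0 < c) (h : ⌊x / c⌋ = ⌊y / c⌋) : |x - y| < c := by
  have h1 : ((⌊y / c⌋ : ℝ)) * c ≤ x := (le_div_iff₀ hc).mp (h ▸ Int.floor_le (x / c))
  have h2 : x < ((⌊y / c⌋ : ℝ) + 1) * c := by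
    have h' := Int.lt_floor_add_one (x / c); rw [h] at h'
    have := (div_lt_iff₀ hc).mp h'; push_cast at this ⊢; linarith
  have h3 : ((⌊y / c⌋ : ℝ)) * c ≤ y := (le_div_iff₀ hc).mp (Int.floor_le (y / c))
  have h4 : y < ((⌊y / c⌋ : ℝ) + 1) * c := by
    have := (div_lt_iff₀ hc).mp (Int.lt_floor_add_one (y / c)); push_cast at this ⊢; linarith
  rw [abs_sub_lt_iff]; constructor <;> nlinarith

/-- the number of short lattice vectors `p_m`, `|||p_m||| < 2k^{r₁}`, with
`|p_m| < |ε_q| q k^{r₁/3}`, does not exceed `k^{2r₁/3}`. -/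
theorem statement3 (α μ : ℝ) (hα : Irrational α) (hμ2 : 2 ≤ μ) :
    ∃ k₀ : ℝ, 1 ≤ k₀ ∧ ∀ k : ℝ, k₀ ≤ k → ∀ r₁ : ℝ, 1 ≤ r₁ →
      ∀ p q : ℤ, 0 < q → (q : ℝ) ≤ 4 * k ^ r₁ →
        (∀ p' q' : ℤ, 0 < q' → (q' : ℝ) ≤ 4 * k ^ r₁ →
          |α * (q : ℝ) + (p : ℝ)| ≤ |α * (q' : ℝ) + (p' : ℝ)|) →
        |α * (q : ℝ) + (p : ℝ)| ≤ (1 / 4) * k ^ (-r₁) →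
        {m : (ℤ × ℤ) × (ℤ × ℤ) | latticeNorm m < 2 * k ^ r₁ ∧
            ‖latticeVec α m‖ <
              |α + (p : ℝ) / (q : ℝ)| * (q : ℝ) * k ^ (r₁ / 3)}.Finite ∧
        ({m : (ℤ × ℤ) × (ℤ × ℤ) | latticeNorm m < 2 * k ^ r₁ ∧
            ‖latticeVec α m‖ <
              |α + (p : ℝ) / (q : ℝ)| * (q : ℝ) * k ^ (r₁ / 3)}.ncard : ℝ)
          ≤ k ^ (2 * r₁ / 3) := by
  refine ⟨1000, by norm_num, ?_⟩
  intro k hk r₁ hr₁ p q hq hq4 hbest hsmall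
  have hk1 : (1 : ℝ) ≤ k := by linarith
  have hk0 : (0 : ℝ) < k := by linarith
  have hpi := Real.pi_gt_three
  set E : ℝ := |α * (q : ℝ) + (p : ℝ)| with hEdef
  have hqR : (0 : ℝ) < (q : ℝ) := by exact_mod_cast hq
  have hEpos : 0 < E := by
    rw [hEdef, abs_pos]
    intro h0
    exact hα ⟨(-p : ℚ) / (q : ℚ), by push_cast; field_simp; linarith⟩
  have hrw : |α + (p : ℝ) / (q : ℝ)| * (q : ℝ) = E := by
    have h : α + (p : ℝ) / (q : ℝ) = (α * q + p) / q := by field_simp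
    rw [h, abs_div, abs_of_pos hqR, div_mul_cancel₀ _ (ne_of_gt hqR)]
  have hE1 : E ≤ 1 := by
    have : k ^ (-r₁) ≤ 1 := Real.rpow_le_one_of_one_le_of_nonpos hk1 (by linarith)
    linarith [hsmall]
  have hE_le : ∀ x y : ℤ, ¬(x = 0 ∧ y = 0) → |(y : ℝ)| ≤ 4 * k ^ r₁ →
      E ≤ |(x : ℝ) + α * (y : ℝ)| := by
    intro x y hxy hy4
    rcases eq_or_ne y 0 with hy | hy
    · subst hy
      have hx : x ≠ 0 := by tauto
      have h1 : (1 : ℝ) ≤ |(x : ℝ)| := by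
        have := Int.one_le_abs hx
        calc (1:ℝ) ≤ ((|x| : ℤ) : ℝ) := by exact_mod_cast this
          _ = |(x : ℝ)| := by push_cast; ring
      simp only [Int.cast_zero, mul_zero, add_zero]
      linarith
    · rcases lt_or_gt_of_ne hy with hyneg | hypos
      · have hyc : ((-y : ℤ) : ℝ) ≤ 4 * k ^ r₁ := by
          rw [abs_of_neg (by exact_mod_cast hyneg : ((y:ℝ) < 0))] at hy4
          push_cast; linarith
        have := hbest (-x) (-y) (by omega) hyc
        calc E ≤ |α * ((-y : ℤ) : ℝ) + ((-x : ℤ) : ℝ)| := this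
          _ = |(x : ℝ) + α * (y : ℝ)| := by push_cast; rw [← abs_neg]; ring_nf
      · have hyc : ((y : ℤ) : ℝ) ≤ 4 * k ^ r₁ := by
          rw [abs_of_pos (by exact_mod_cast hypos : (0 < (y:ℝ)))] at hy4
          linarith
        have := hbest x y hypos hyc
        calc E ≤ |α * (y : ℝ) + (x : ℝ)| := this
          _ = |(x : ℝ) + α * (y : ℝ)| := by rw [add_comm]
  clear_value E
  set S := {m : (ℤ × ℤ) × (ℤ × ℤ) | latticeNorm m < 2 * k ^ r₁ ∧
      ‖latticeVec α m‖ < |α + (p : ℝ) / (q : ℝ)| * (q : ℝ) * k ^ (r₁ / 3)} with hSdef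
  set x := k ^ (r₁ / 3) with hxdef
  clear_value x
  have hxpos : 0 < x := by rw [hxdef]; exact Real.rpow_pos_of_pos hk0 _
  have hx10 : (10 : ℝ) ≤ x := by
    have h13 : k ^ ((1 : ℝ)/3) ≤ x := by
      rw [hxdef]; exact Real.rpow_le_rpow_of_exponent_le hk1 (by linarith)
    by_contra hcon
    push_neg at hcon
    have h3 : (k ^ ((1:ℝ)/3)) ^ (3 : ℕ) = k := by
      rw [← Real.rpow_natCast (k ^ ((1:ℝ)/3)) 3, ← Real.rpow_mul (le_of_lt hk0)]
      norm_num
    have hlt : (k ^ ((1:ℝ)/3)) ^ (3 : ℕ) < 10 ^ (3 : ℕ) :=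
      pow_lt_pow_left₀ (by linarith) (le_of_lt (Real.rpow_pos_of_pos hk0 _)) (by norm_num)
    rw [h3] at hlt
    norm_num at hlt
    linarith
  have hcomp : ∀ m ∈ S, |(m.2.1 : ℝ)| < 2 * k ^ r₁ ∧ |(m.2.2 : ℝ)| < 2 * k ^ r₁ := by
    intro m hm
    have h := hm.1
    rw [latticeNorm] at h
    have h0 : (0:ℝ) ≤ max |(m.1.1 : ℝ)| |(m.1.2 : ℝ)| := le_max_iff.mpr (Or.inl (abs_nonneg _))
    exact ⟨lt_of_le_of_lt (le_max_left _ _) (by linarith),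
           lt_of_le_of_lt (le_max_right _ _) (by linarith)⟩
  -- separation
  have hsep : ∀ m ∈ S, ∀ m' ∈ S, m ≠ m' →
      2 * Real.pi * E ≤ ‖latticeVec α m - latticeVec α m'‖ := by
    intro m hm m' hm' hne
    have hc1 := hcomp m hm
    have hc2 := hcomp m' hm'
    have hy1 : |((m.2.1 - m'.2.1 : ℤ) : ℝ)| ≤ 4 * k ^ r₁ := by
      push_cast
      calc |(m.2.1 : ℝ) - (m'.2.1 : ℝ)| ≤ |(m.2.1 : ℝ)| + |(m'.2.1 : ℝ)| := abs_sub _ _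
        _ ≤ 4 * k ^ r₁ := by linarith [hc1.1, hc2.1]
    have hy2 : |((m.2.2 - m'.2.2 : ℤ) : ℝ)| ≤ 4 * k ^ r₁ := by
      push_cast
      calc |(m.2.2 : ℝ) - (m'.2.2 : ℝ)| ≤ |(m.2.2 : ℝ)| + |(m'.2.2 : ℝ)| := abs_sub _ _
        _ ≤ 4 * k ^ r₁ := by linarith [hc1.2, hc2.2]
    have hre : (latticeVec α m - latticeVec α m').re
        = 2 * Real.pi * (((m.1.1 - m'.1.1 : ℤ) : ℝ) + α * ((m.2.1 - m'.2.1 : ℤ) : ℝ)) := by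
      simp only [Complex.sub_re, latticeVec_re]; push_cast; ring
    have him : (latticeVec α m - latticeVec α m').im
        = 2 * Real.pi * (((m.1.2 - m'.1.2 : ℤ) : ℝ) + α * ((m.2.2 - m'.2.2 : ℤ) : ℝ)) := by
      simp only [Complex.sub_im, latticeVec_im]; push_cast; ring
    have hpi0 : (0:ℝ) < 2 * Real.pi := by linarith
    by_cases hac : m.1.1 - m'.1.1 = 0 ∧ m.2.1 - m'.2.1 = 0
    · have hbd : ¬(m.1.2 - m'.1.2 = 0 ∧ m.2.2 - m'.2.2 = 0) := by
        intro hbd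
        apply hne
        obtain ⟨h1, h2⟩ := hac; obtain ⟨h3, h4⟩ := hbd
        have e1 : m.1.1 = m'.1.1 := by omega
        have e2 : m.2.1 = m'.2.1 := by omega
        have e3 : m.1.2 = m'.1.2 := by omega
        have e4 : m.2.2 = m'.2.2 := by omega
        exact Prod.ext (Prod.ext e1 e3) (Prod.ext e2 e4)
      have h1 := hE_le _ _ hbd hy2
      calc 2 * Real.pi * E
          ≤ 2 * Real.pi * |((m.1.2 - m'.1.2 : ℤ) : ℝ) + α * ((m.2.2 - m'.2.2 : ℤ) : ℝ)| :=
            mul_le_mul_of_nonneg_left h1 (le_of_lt hpi0)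
        _ = |(latticeVec α m - latticeVec α m').im| := by
            rw [him, abs_mul, abs_of_pos hpi0]
        _ ≤ ‖latticeVec α m - latticeVec α m'‖ := Complex.abs_im_le_norm _
    · have h1 := hE_le _ _ hac hy1
      calc 2 * Real.pi * E
          ≤ 2 * Real.pi * |((m.1.1 - m'.1.1 : ℤ) : ℝ) + α * ((m.2.1 - m'.2.1 : ℤ) : ℝ)| :=
            mul_le_mul_of_nonneg_left h1 (le_of_lt hpi0)
        _ = |(latticeVec α m - latticeVec α m').re| := by
            rw [hre, abs_mul, abs_of_pos hpi0]
        _ ≤ ‖latticeVec α m - latticeVec α m'‖ := Complex.abs_re_le_norm _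
  -- the grid map
  set c : ℝ := Real.sqrt 2 * Real.pi * E with hcdef
  have hsqrt2 : (0:ℝ) < Real.sqrt 2 := Real.sqrt_pos.mpr (by norm_num)
  have hcpos : 0 < c := by rw [hcdef]; positivity
  clear_value c
  set f : (ℤ × ℤ) × (ℤ × ℤ) → ℤ × ℤ :=
    fun m => (⌊(latticeVec α m).re / c⌋, ⌊(latticeVec α m).im / c⌋) with hfdef
  have hinj : Set.InjOn f S := by
    intro m hm m' hm' hfeq
    by_contra hne
    have hsep' := hsep m hm m' hm' hne
    have hre : |(latticeVec α m).re - (latticeVec α m').re| < c :=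
      floor_eq_dist hcpos (congrArg Prod.fst hfeq)
    have him : |(latticeVec α m).im - (latticeVec α m').im| < c :=
      floor_eq_dist hcpos (congrArg Prod.snd hfeq)
    set z := latticeVec α m - latticeVec α m' with hz
    have hsq : ‖z‖ ^ 2 = z.re ^ 2 + z.im ^ 2 := by
      rw [Complex.sq_norm, Complex.normSq_apply]; ring
    have e1 : z.re ^ 2 < c ^ 2 := by
      calc z.re ^ 2 = |z.re| ^ 2 := (sq_abs _).symm
        _ < c ^ 2 := pow_lt_pow_left₀ (by rw [hz, Complex.sub_re]; exact hre) (abs_nonneg _)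
            (by norm_num)
    have e2 : z.im ^ 2 < c ^ 2 := by
      calc z.im ^ 2 = |z.im| ^ 2 := (sq_abs _).symm
        _ < c ^ 2 := pow_lt_pow_left₀ (by rw [hz, Complex.sub_im]; exact him) (abs_nonneg _)
            (by norm_num)
    have hcc : 2 * c ^ 2 = (2 * Real.pi * E) ^ 2 := by
      rw [hcdef]
      have h2 : Real.sqrt 2 ^ 2 = 2 := Real.sq_sqrt (by norm_num)
      nlinarith [h2]
    have h2 : ‖z‖ ^ 2 < (2 * Real.pi * E) ^ 2 := by
      rw [← hcc, hsq]; linarith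
    have : ‖z‖ < 2 * Real.pi * E :=
      lt_of_pow_lt_pow_left₀ 2 (by positivity) h2
    linarith
  -- the target finite grid
  set N : ℤ := ⌈(E * x) / c⌉ with hNdef
  have hRc : (E * x) / c ≤ x / 4 := by
    have hsq2 : (1.4 : ℝ) ≤ Real.sqrt 2 := by
      rw [show (1.4:ℝ) = Real.sqrt 1.96 from by
        rw [show (1.96:ℝ) = 1.4 ^ 2 by norm_num]; exact (Real.sqrt_sq (by norm_num)).symm]
      exact Real.sqrt_le_sqrt (by norm_num)
    have h4 : (4 : ℝ) ≤ Real.sqrt 2 * Real.pi := by nlinarith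
    have heq : (E * x) / c = x / (Real.sqrt 2 * Real.pi) := by
      rw [hcdef]; field_simp
    rw [heq]
    exact div_le_div_of_nonneg_left (le_of_lt hxpos) (by norm_num) h4
  have hN1 : 1 ≤ N := by
    rw [hNdef]
    exact Int.one_le_ceil_iff.mpr (by positivity)
  have hceilN : (E * x) / c ≤ (N : ℝ) := by rw [hNdef]; exact Int.le_ceil _
  have hNle : (N : ℝ) ≤ x / 4 + 1 := by
    have h := Int.ceil_lt_add_one ((E * x) / c)
    rw [← hNdef] at h
    linarith
  clear_value N
  set T : Finset (ℤ × ℤ) := Finset.Icc (-N) N ×ˢ Finset.Icc (-N) N with hTdef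
  have hmem : ∀ m ∈ S, f m ∈ T := by
    intro m hm
    have habs : ‖latticeVec α m‖ < E * x := by
      have h := hm.2
      rw [hrw] at h
      rw [hxdef]
      exact h
    have hb : ∀ u : ℝ, |u| ≤ ‖latticeVec α m‖ → ⌊u / c⌋ ∈ Finset.Icc (-N) N := by
      intro u hu
      have hub : |u| < E * x := lt_of_le_of_lt hu habs
      obtain ⟨hul, hur⟩ := abs_lt.mp hub
      have h1 : u / c < (E * x) / c := div_lt_div_of_pos_right hur hcpos
      have h2 : -((E * x) / c) < u / c := by
        have h2' := div_lt_div_of_pos_right hul hcpos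
        rwa [neg_div] at h2'
      have hceil : (E * x) / c ≤ (N : ℝ) := hceilN
      rw [Finset.mem_Icc]
      have hfl := Int.floor_le (u / c)
      have hfu := Int.lt_floor_add_one (u / c)
      constructor
      · have hcast : ((-N - 1 : ℤ) : ℝ) < (⌊u / c⌋ : ℝ) := by push_cast; linarith
        have : (-N - 1 : ℤ) < ⌊u / c⌋ := by exact_mod_cast hcast
        omega
      · have hcast : ((⌊u / c⌋ : ℤ) : ℝ) < ((N + 1 : ℤ) : ℝ) := by push_cast; linarith
        have : ⌊u / c⌋ < N + 1 := by exact_mod_cast hcast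
        omega
    exact Finset.mem_product.mpr
      ⟨hb _ (Complex.abs_re_le_norm _), hb _ (Complex.abs_im_le_norm _)⟩
  have himg : f '' S ⊆ (T : Set (ℤ × ℤ)) := by
    rintro _ ⟨m, hm, rfl⟩; exact hmem m hm
  have hfin : S.Finite :=
    Set.Finite.of_finite_image (Set.Finite.subset T.finite_toSet himg) hinj
  refine ⟨hfin, ?_⟩
  have hcard : S.ncard ≤ T.card := by
    rw [← Set.ncard_image_of_injOn hinj]
    have := Set.ncard_le_ncard himg T.finite_toSet
    rwa [Set.ncard_coe_finset] at this
  have hTcard : (T.card : ℝ) = ((2 * N + 1 : ℤ) : ℝ) ^ 2 := by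
    rw [hTdef, Finset.card_product, Int.card_Icc, Nat.cast_mul]
    have h0 : (0 : ℤ) ≤ N + 1 - -N := by omega
    have h1 : ((N + 1 - -N).toNat : ℤ) = 2 * N + 1 := by rw [Int.toNat_of_nonneg h0]; ring
    have h2 : (((N + 1 - -N).toNat : ℕ) : ℝ) = ((2 * N + 1 : ℤ) : ℝ) := by exact_mod_cast h1
    rw [h2]
    ring
  have hfinal : ((2 * N + 1 : ℤ) : ℝ) ^ 2 ≤ k ^ (2 * r₁ / 3) := by
    have h1 : ((2 * N + 1 : ℤ) : ℝ) ≤ x := by push_cast; linarith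
    have h2 : (0 : ℝ) ≤ ((2 * N + 1 : ℤ) : ℝ) := by
      have : (1:ℝ) ≤ (N:ℝ) := by exact_mod_cast hN1
      push_cast; linarith
    have hx2 : x ^ 2 = k ^ (2 * r₁ / 3) := by
      rw [hxdef, ← Real.rpow_natCast (k ^ (r₁/3)) 2, ← Real.rpow_mul (le_of_lt hk0)]
      norm_num
      ring_nf
    rw [← hx2]
    exact pow_le_pow_left₀ h2 h1 2
  calc (S.ncard : ℝ) ≤ (T.card : ℝ) := by exact_mod_cast hcard
    _ = ((2 * N + 1 : ℤ) : ℝ) ^ 2 := hTcard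
    _ ≤ k ^ (2 * r₁ / 3) := hfinal
end

section
/- Let α be irrational, k large and r₁ ≥ 1. Suppose that the denominator q of the best rational approximation to α (in the range 0 < q ≤ 4k^{r₁}, with |αq+p| ≤ (1/4)k^{−r₁}) satisfies q > k^{2r₁/3}. Then the number of vectors p_m = 2π(s₁ + α s₂) with |||p_m||| < 2k^{r₁} satisfying |p_m| < k^{−2r₁/3} does not exceed 2^{12} · k^{2r₁/3}. -/
set_option maxHeartbeats 1000000


/-- if the best-approximation denominator satisfies `q > k^{2r₁/3}`, then the
number of lattice vectors `p_m`, `|||p_m||| < 2k^{r₁}`, with `|p_m| < k^{-2r₁/3}` does not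
exceed `2¹² k^{2r₁/3}`. -/
theorem statement4 (α μ : ℝ) (hα : Irrational α) (hμ2 : 2 ≤ μ) :
    ∃ k₀ : ℝ, 1 ≤ k₀ ∧ ∀ k : ℝ, k₀ ≤ k → ∀ r₁ : ℝ, 1 ≤ r₁ →
      ∀ p q : ℤ, 0 < q → (q : ℝ) ≤ 4 * k ^ r₁ →
        (∀ p' q' : ℤ, 0 < q' → (q' : ℝ) ≤ 4 * k ^ r₁ →
          |α * (q : ℝ) + (p : ℝ)| ≤ |α * (q' : ℝ) + (p' : ℝ)|) →
        |α * (q : ℝ) + (p : ℝ)| ≤ (1 / 4) * k ^ (-r₁) →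
        k ^ (2 * r₁ / 3) < (q : ℝ) →
        {m : (ℤ × ℤ) × (ℤ × ℤ) | latticeNorm m < 2 * k ^ r₁ ∧
            ‖latticeVec α m‖ < k ^ (-(2 * r₁ / 3))}.Finite ∧
        ({m : (ℤ × ℤ) × (ℤ × ℤ) | latticeNorm m < 2 * k ^ r₁ ∧
            ‖latticeVec α m‖ < k ^ (-(2 * r₁ / 3))}.ncard : ℝ)
          ≤ 2 ^ 12 * k ^ (2 * r₁ / 3) := by
  refine ⟨1, le_rfl, ?_⟩
  intro k hk r₁ hr₁ p q hq hq4 hmin hsmall hqbig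
  have hk0 : (0:ℝ) < k := lt_of_lt_of_le one_pos hk
  have hqR : (0:ℝ) < (q:ℝ) := by exact_mod_cast hq
  have hr0 : (0:ℝ) ≤ r₁ := le_trans zero_le_one hr₁
  set K : ℝ := k ^ (r₁ / 3) with hKdef
  have hK1 : (1:ℝ) ≤ K := by
    calc (1:ℝ) = k ^ (0:ℝ) := (Real.rpow_zero k).symm
    _ ≤ k ^ (r₁ / 3) := Real.rpow_le_rpow_of_exponent_le hk (by positivity)
  have hKr1 : (1:ℝ) ≤ k ^ r₁ := by
    calc (1:ℝ) = k ^ (0:ℝ) := (Real.rpow_zero k).symm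
    _ ≤ k ^ r₁ := Real.rpow_le_rpow_of_exponent_le hk hr0
  set δ : ℝ := k ^ (-(2 * r₁ / 3)) / 6 with hδdef
  have hδ0 : 0 < δ := by positivity
  have hpow1 : k ^ r₁ * k ^ (-r₁) = 1 := by
    rw [← Real.rpow_add hk0]; simp
  have hδval : δ * k ^ r₁ = K / 6 := by
    rw [hδdef, hKdef, div_mul_eq_mul_div, ← Real.rpow_add hk0]
    congr 2; ring
  have hpow3 : K * k ^ (2 * r₁ / 3) = k ^ r₁ := by
    rw [hKdef, ← Real.rpow_add hk0]; congr 1; ring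
  have hKK : K * K = k ^ (2 * r₁ / 3) := by
    rw [hKdef, ← Real.rpow_add hk0]; congr 1; ring
  -- ε > 0 since α is irrational
  have hne : α * (q:ℝ) + (p:ℝ) ≠ 0 := by
    intro h
    have hα' : α = (-(p:ℝ)) / (q:ℝ) := by field_simp; linarith
    exact hα ⟨(-p : ℚ) / (q : ℚ), by push_cast; rw [hα']⟩
  have hεpos : 0 < |α * (q:ℝ) + (p:ℝ)| := abs_pos.mpr hne
  -- coprimality of p and q
  have hcop : IsCoprime (q:ℤ) p := by
    rw [Int.isCoprime_iff_gcd_eq_one]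
    by_contra hg
    set g : ℕ := Int.gcd q p with hgdef
    have hg0 : 0 < g := Int.gcd_pos_of_ne_zero_left p (by omega)
    have hg2 : 2 ≤ g := by omega
    obtain ⟨q', hq'⟩ : (g:ℤ) ∣ q := Int.gcd_dvd_left q p
    obtain ⟨p', hp'⟩ : (g:ℤ) ∣ p := Int.gcd_dvd_right q p
    have hq'0 : 0 < q' := by
      rcases lt_trichotomy q' 0 with h | h | h
      · nlinarith [hq' ▸ hq, (by exact_mod_cast Nat.zero_le g : (0:ℤ) ≤ (g:ℤ))]
      · subst h; simp at hq'; omega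
      · exact h
    have hq'le : q' ≤ q := by nlinarith [(by exact_mod_cast hg2 : (2:ℤ) ≤ (g:ℤ))]
    have hq'4 : (q' : ℝ) ≤ 4 * k ^ r₁ := le_trans (by exact_mod_cast hq'le) hq4
    have hkey : α * (q:ℝ) + (p:ℝ) = (g:ℝ) * (α * (q':ℝ) + (p':ℝ)) := by
      rw [hq', hp']; push_cast; ring
    have h1 := hmin p' q' hq'0 hq'4
    have h2 : |α * (q:ℝ) + (p:ℝ)| = (g:ℝ) * |α * (q':ℝ) + (p':ℝ)| := by
      rw [hkey, abs_mul, abs_of_nonneg (by positivity : (0:ℝ) ≤ (g:ℝ))]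
    have hgR : (2:ℝ) ≤ (g:ℝ) := by exact_mod_cast hg2
    nlinarith [hεpos]
  -- the index bounds
  set J : ℤ := ⌈(q:ℝ) * δ⌉ with hJdef
  set Na : ℤ := ⌈2 * k ^ r₁ / (q:ℝ)⌉ + 1 with hNadef
  have hJ0 : 0 ≤ J := Int.ceil_nonneg (by positivity)
  have hNa0 : 1 ≤ Na := by
    have : (0:ℤ) ≤ ⌈2 * k ^ r₁ / (q:ℝ)⌉ := Int.ceil_nonneg (by positivity)
    omega
  -- the key per-coordinate estimate
  have hkey : ∀ s t : ℤ, |(t:ℝ)| < 2 * k ^ r₁ → |(s:ℝ) + α * (t:ℝ)| < δ →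
      |q * s - p * t| ≤ J ∧ |t / q| ≤ Na := by
    intro s t ht hst
    constructor
    · have hjr : ((q * s - p * t : ℤ) : ℝ)
          = (q:ℝ) * ((s:ℝ) + α * (t:ℝ)) - (t:ℝ) * (α * (q:ℝ) + (p:ℝ)) := by
        push_cast; ring
      have h1 : |((q * s - p * t : ℤ) : ℝ)| ≤ (q:ℝ) * δ + 1 / 2 := by
        rw [hjr]
        have e1 : |(q:ℝ) * ((s:ℝ) + α * (t:ℝ))| ≤ (q:ℝ) * δ := by
          rw [abs_mul, abs_of_pos hqR]
          exact mul_le_mul_of_nonneg_left hst.le hqR.le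
        have e2 : |(t:ℝ) * (α * (q:ℝ) + (p:ℝ))| ≤ 1 / 2 := by
          rw [abs_mul]
          calc |(t:ℝ)| * |α * (q:ℝ) + (p:ℝ)|
              ≤ (2 * k ^ r₁) * ((1/4) * k ^ (-r₁)) :=
                mul_le_mul ht.le hsmall (abs_nonneg _) (by positivity)
            _ = 1 / 2 := by nlinarith [hpow1]
        calc |(q:ℝ) * ((s:ℝ) + α * (t:ℝ)) - (t:ℝ) * (α * (q:ℝ) + (p:ℝ))|
            ≤ |(q:ℝ) * ((s:ℝ) + α * (t:ℝ))| + |(t:ℝ) * (α * (q:ℝ) + (p:ℝ))| :=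
              abs_sub _ _
          _ ≤ (q:ℝ) * δ + 1 / 2 := add_le_add e1 e2
      by_contra hcon
      push_neg at hcon
      have : (J:ℝ) + 1 ≤ |((q * s - p * t : ℤ) : ℝ)| := by
        rw [← Int.cast_abs]
        exact_mod_cast hcon
      have := Int.le_ceil ((q:ℝ) * δ)
      linarith
    · have e := Int.mul_ediv_add_emod t q
      have h0 : (0:ℤ) ≤ t % q := Int.emod_nonneg t (by omega)
      have h1 : t % q < q := Int.emod_lt_of_pos t hq
      have hcast : (q:ℝ) * ((t / q : ℤ) : ℝ) = (t:ℝ) - ((t % q : ℤ) : ℝ) := by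
        have h' : (q * (t / q) : ℤ) = t - t % q := by omega
        exact_mod_cast congrArg (fun x : ℤ => (x:ℝ)) h'
      have habs : (q:ℝ) * |((t / q : ℤ) : ℝ)| ≤ 2 * k ^ r₁ + (q:ℝ) := by
        have : |(q:ℝ) * ((t / q : ℤ) : ℝ)| ≤ 2 * k ^ r₁ + (q:ℝ) := by
          rw [hcast]
          calc |(t:ℝ) - ((t % q : ℤ) : ℝ)| ≤ |(t:ℝ)| + |((t % q : ℤ) : ℝ)| := abs_sub _ _
            _ ≤ 2 * k ^ r₁ + (q:ℝ) := by
                have : |((t % q : ℤ) : ℝ)| ≤ (q:ℝ) := by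
                  rw [abs_of_nonneg (by exact_mod_cast h0)]
                  exact_mod_cast h1.le
                linarith
        rwa [abs_mul, abs_of_pos hqR] at this
      have hNaR : |((t / q : ℤ) : ℝ)| ≤ (Na:ℝ) := by
        have h2 : |((t / q : ℤ) : ℝ)| ≤ 2 * k ^ r₁ / (q:ℝ) + 1 := by
          rw [div_add' _ _ _ (ne_of_gt hqR), le_div_iff₀ hqR]
          linarith
        have := Int.le_ceil (2 * k ^ r₁ / (q:ℝ))
        have : (Na:ℝ) = (⌈2 * k ^ r₁ / (q:ℝ)⌉ : ℝ) + 1 := by rw [hNadef]; push_cast; ring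
        linarith [Int.le_ceil (2 * k ^ r₁ / (q:ℝ))]
      rw [← Int.cast_abs] at hNaR
      exact_mod_cast hNaR
  -- the injection
  set f : (ℤ × ℤ) × (ℤ × ℤ) → (ℤ × ℤ) × (ℤ × ℤ) :=
    fun m => ((q * m.1.1 - p * m.2.1, m.2.1 / q), (q * m.1.2 - p * m.2.2, m.2.2 / q)) with hfdef
  have hrecover : ∀ s t s' t' : ℤ, q * s - p * t = q * s' - p * t' → t / q = t' / q →
      s = s' ∧ t = t' := by
    intro s t s' t' h1 h2
    have hd : (q:ℤ) ∣ (t - t') := by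
      refine hcop.dvd_of_dvd_mul_left ⟨s - s', ?_⟩
      linear_combination -h1
    have ht : t = t' := by
      have e1 := Int.mul_ediv_add_emod t q
      have e2 := Int.mul_ediv_add_emod t' q
      have hmod : t % q = t' % q := Int.ModEq.symm (Int.modEq_iff_dvd.mpr hd)
      rw [h2] at e1
      linarith
    refine ⟨?_, ht⟩
    subst ht
    have : q * s = q * s' := by linarith
    exact mul_left_cancel₀ (by omega) this
  have hinj : Function.Injective f := by
    rintro ⟨⟨s11, s12⟩, t1, t2⟩ ⟨⟨s11', s12'⟩, t1', t2'⟩ h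
    simp only [hfdef, Prod.mk.injEq] at h
    obtain ⟨⟨h1, h2⟩, h3, h4⟩ := h
    obtain ⟨e1, e2⟩ := hrecover _ _ _ _ h1 h2
    obtain ⟨e3, e4⟩ := hrecover _ _ _ _ h3 h4
    simp [e1, e2, e3, e4]
  -- the target finset
  set F : Finset ((ℤ × ℤ) × (ℤ × ℤ)) :=
    (Finset.Icc (-J) J ×ˢ Finset.Icc (-Na) Na) ×ˢ (Finset.Icc (-J) J ×ˢ Finset.Icc (-Na) Na)
    with hFdef
  set M : Set ((ℤ × ℤ) × (ℤ × ℤ)) :=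
    {m : (ℤ × ℤ) × (ℤ × ℤ) | latticeNorm m < 2 * k ^ r₁ ∧
      ‖latticeVec α m‖ < k ^ (-(2 * r₁ / 3))} with hMdef
  -- membership of the image
  have himg : f '' M ⊆ ↑F := by
    rintro _ ⟨m, hm, rfl⟩
    obtain ⟨hnorm, habs⟩ := hm
    have hmax0 : (0:ℝ) ≤ max |(m.1.1 : ℝ)| |(m.1.2 : ℝ)| :=
      le_trans (abs_nonneg _) (le_max_left _ _)
    have ht1 : |(m.2.1 : ℝ)| < 2 * k ^ r₁ := by
      have : |(m.2.1 : ℝ)| ≤ latticeNorm m := by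
        unfold latticeNorm
        have := le_max_left |(m.2.1 : ℝ)| |(m.2.2 : ℝ)|
        linarith
      linarith
    have ht2 : |(m.2.2 : ℝ)| < 2 * k ^ r₁ := by
      have : |(m.2.2 : ℝ)| ≤ latticeNorm m := by
        unfold latticeNorm
        have := le_max_right |(m.2.1 : ℝ)| |(m.2.2 : ℝ)|
        linarith
      linarith
    -- real/imaginary parts
    have hre : (latticeVec α m).re = 2 * Real.pi * ((m.1.1 : ℝ) + α * (m.2.1 : ℝ)) := by
      simp [latticeVec]
    have him : (latticeVec α m).im = 2 * Real.pi * ((m.1.2 : ℝ) + α * (m.2.2 : ℝ)) := by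
      simp [latticeVec]
    have hπ : (3:ℝ) < Real.pi := Real.pi_gt_three
    have hx : |(m.1.1 : ℝ) + α * (m.2.1 : ℝ)| < δ := by
      have h1 : |(latticeVec α m).re| ≤ ‖latticeVec α m‖ :=
        Complex.abs_re_le_norm _
      rw [hre, abs_mul, abs_of_pos (by linarith : (0:ℝ) < 2 * Real.pi)] at h1
      rw [hδdef]
      nlinarith [abs_nonneg ((m.1.1 : ℝ) + α * (m.2.1 : ℝ))]
    have hy : |(m.1.2 : ℝ) + α * (m.2.2 : ℝ)| < δ := by
      have h1 : |(latticeVec α m).im| ≤ ‖latticeVec α m‖ :=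
        Complex.abs_im_le_norm _
      rw [him, abs_mul, abs_of_pos (by linarith : (0:ℝ) < 2 * Real.pi)] at h1
      rw [hδdef]
      nlinarith [abs_nonneg ((m.1.2 : ℝ) + α * (m.2.2 : ℝ))]
    obtain ⟨hj1, ha1⟩ := hkey m.1.1 m.2.1 ht1 hx
    obtain ⟨hj2, ha2⟩ := hkey m.1.2 m.2.2 ht2 hy
    simp only [hFdef, Finset.coe_product, Set.mem_prod, Finset.mem_coe, Finset.mem_Icc]
    rw [abs_le] at hj1 ha1 hj2 ha2
    exact ⟨⟨⟨hj1.1, hj1.2⟩, ⟨ha1.1, ha1.2⟩⟩, ⟨⟨hj2.1, hj2.2⟩, ⟨ha2.1, ha2.2⟩⟩⟩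
  -- finiteness
  have hfin : M.Finite :=
    Set.Finite.of_finite_image (F.finite_toSet.subset himg) hinj.injOn
  refine ⟨hfin, ?_⟩
  -- cardinality bound
  have hcard1 : M.ncard ≤ F.card := by
    calc M.ncard = (f '' M).ncard := (Set.ncard_image_of_injective M hinj).symm
      _ ≤ (↑F : Set ((ℤ × ℤ) × (ℤ × ℤ))).ncard :=
          Set.ncard_le_ncard himg F.finite_toSet
      _ = F.card := Set.ncard_coe_finset F
  have hcJ : ((Finset.Icc (-J) J).card : ℝ) = 2 * (J:ℝ) + 1 := by
    rw [Int.card_Icc, show J + 1 - -J = 2 * J + 1 by ring]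
    rw [show ((2 * J + 1).toNat : ℝ) = ((2 * J + 1 : ℤ) : ℝ) from by
      exact_mod_cast congrArg (fun x : ℤ => (x:ℝ)) (Int.toNat_of_nonneg (by omega))]
    push_cast; ring
  have hcNa : ((Finset.Icc (-Na) Na).card : ℝ) = 2 * (Na:ℝ) + 1 := by
    rw [Int.card_Icc, show Na + 1 - -Na = 2 * Na + 1 by ring]
    rw [show ((2 * Na + 1).toNat : ℝ) = ((2 * Na + 1 : ℤ) : ℝ) from by
      exact_mod_cast congrArg (fun x : ℤ => (x:ℝ)) (Int.toNat_of_nonneg (by omega))]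
    push_cast; ring
  have hFcard : (F.card : ℝ) = ((2 * (J:ℝ) + 1) * (2 * (Na:ℝ) + 1))
      * ((2 * (J:ℝ) + 1) * (2 * (Na:ℝ) + 1)) := by
    rw [hFdef]
    rw [Finset.card_product, Finset.card_product]
    push_cast [hcJ, hcNa]
    ring
  -- the analytic estimate
  have hP : (2 * (J:ℝ) + 1) * (2 * (Na:ℝ) + 1) ≤ 64 * K := by
    set A : ℝ := (q:ℝ) * δ with hAdef
    set B : ℝ := 2 * k ^ r₁ / (q:ℝ) with hBdef
    have hA0 : 0 ≤ A := by positivity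
    have hB0 : 0 ≤ B := by positivity
    have hJle : (J:ℝ) ≤ A + 1 := le_of_lt (Int.ceil_lt_add_one _)
    have hNale : (Na:ℝ) ≤ B + 2 := by
      have := Int.ceil_lt_add_one B
      rw [hNadef]; push_cast
      linarith
    have hAK : A ≤ (2/3) * K := by
      have h1 : A ≤ 4 * k ^ r₁ * δ := mul_le_mul_of_nonneg_right hq4 hδ0.le
      nlinarith [hδval]
    have hBK : B ≤ 2 * K := by
      rw [hBdef, div_le_iff₀ hqR]
      have hKpos : 0 < K := lt_of_lt_of_le one_pos hK1
      nlinarith [mul_lt_mul_of_pos_left hqbig hKpos, hpow3]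
    have hAB : A * B = K / 3 := by
      have h1 : A * B = 2 * (δ * k ^ r₁) := by
        rw [hAdef, hBdef]; field_simp
      rw [h1, hδval]; ring
    have step1 : (2 * (J:ℝ) + 1) * (2 * (Na:ℝ) + 1) ≤ (2 * A + 3) * (2 * B + 5) := by
      have h1 : 2 * (J:ℝ) + 1 ≤ 2 * A + 3 := by linarith
      have h2 : 2 * (Na:ℝ) + 1 ≤ 2 * B + 5 := by linarith
      have h3 : 0 ≤ 2 * (Na:ℝ) + 1 := by
        have : (1:ℝ) ≤ (Na:ℝ) := by exact_mod_cast hNa0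
        linarith
      have h4 : 0 ≤ 2 * A + 3 := by linarith
      exact mul_le_mul h1 h2 h3 h4
    have step2 : (2 * A + 3) * (2 * B + 5) = 4 * (A * B) + 10 * A + 6 * B + 15 := by ring
    calc (2 * (J:ℝ) + 1) * (2 * (Na:ℝ) + 1) ≤ (2 * A + 3) * (2 * B + 5) := step1
      _ = 4 * (A * B) + 10 * A + 6 * B + 15 := step2
      _ ≤ 4 * (K / 3) + 10 * ((2/3) * K) + 6 * (2 * K) + 15 := by
          rw [hAB]; linarith
      _ ≤ 64 * K := by linarith
  have hKpos : 0 < K := lt_of_lt_of_le one_pos hK1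
  have hPnn : (0:ℝ) ≤ (2 * (J:ℝ) + 1) * (2 * (Na:ℝ) + 1) := by
    have hJR : (0:ℝ) ≤ (J:ℝ) := by exact_mod_cast hJ0
    have hNaR : (1:ℝ) ≤ (Na:ℝ) := by exact_mod_cast hNa0
    positivity
  calc (M.ncard : ℝ) ≤ (F.card : ℝ) := by exact_mod_cast hcard1
    _ = ((2 * (J:ℝ) + 1) * (2 * (Na:ℝ) + 1)) * ((2 * (J:ℝ) + 1) * (2 * (Na:ℝ) + 1)) :=
        hFcard
    _ ≤ (64 * K) * (64 * K) := mul_le_mul hP hP hPnn (by positivity)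
    _ = 4096 * (K * K) := by ring
    _ = 2 ^ 12 * k ^ (2 * r₁ / 3) := by rw [hKK]; norm_num
end

section
/- Let P and Q be two real polynomials in two variables of degrees p and q respectively, with no common nonconstant factor. Then the set of common real zeros {κ ∈ ℝ² : P(κ) = 0 = Q(κ)} has at most p·q elements. -/
namespace Stmt15

open MvPolynomial Finset Module LinearMap

noncomputable section

set_option maxHeartbeats 1000000
set_option synthInstance.maxHeartbeats 400000

abbrev MP := MvPolynomial (Fin 2) ℝ
abbrev B (m : ℕ) : Submodule ℝ MP := restrictTotalDegree (Fin 2) ℝ m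


lemma homogComp_of_isHomog (p : MP) (d n : ℕ) (hp : p.IsHomogeneous d) :
    homogeneousComponent n p = if n = d then p else 0 := by
  ext m
  rw [coeff_homogeneousComponent]
  rcases eq_or_ne n d with rfl | h2
  · rw [if_pos rfl]
    rcases eq_or_ne m.degree n with h1 | h1
    · rw [if_pos h1]
    · rw [if_neg h1, hp.coeff_eq_zero h1]
  · rw [if_neg h2, coeff_zero]
    rcases eq_or_ne m.degree n with h1 | h1
    · rw [if_pos h1, hp.coeff_eq_zero (h1.trans_ne h2)]
    · rw [if_neg h1]

lemma topComp_ne_zero (f : MP) (hf : f ≠ 0) :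
    homogeneousComponent f.totalDegree f ≠ 0 := by
  obtain ⟨m, hm, hdeg⟩ := Finset.exists_mem_eq_sup f.support
    (support_nonempty.mpr hf) (fun m => m.sum fun _ e => e)
  intro h
  have h2 := congrArg (coeff m) h
  rw [coeff_homogeneousComponent] at h2
  simp only [coeff_zero] at h2
  rw [if_pos (by rw [Finsupp.degree, totalDegree, hdeg]; rfl)] at h2
  exact (mem_support_iff.mp hm) h2

lemma totalDegree_mul_eq {f g : MP} (hf : f ≠ 0) (hg : g ≠ 0) :
    (f * g).totalDegree = f.totalDegree + g.totalDegree := by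
  refine le_antisymm (totalDegree_mul f g) ?_
  set a := f.totalDegree with ha
  set b := g.totalDegree with hb
  have key : homogeneousComponent (a + b) (f * g) =
      homogeneousComponent a f * homogeneousComponent b g := by
    conv_lhs => rw [← sum_homogeneousComponent f, ← sum_homogeneousComponent g,
      Finset.sum_mul_sum, map_sum]
    rw [← ha, ← hb]
    rw [Finset.sum_eq_single_of_mem a (self_mem_range_succ a)]
    · rw [map_sum, Finset.sum_eq_single_of_mem b (self_mem_range_succ b)]
      · rw [homogComp_of_isHomog _ (a + b) (a + b)
          ((homogeneousComponent_isHomogeneous a f).mul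
            (homogeneousComponent_isHomogeneous b g)), if_pos rfl]
      · intro j hj hjb
        rw [homogComp_of_isHomog _ (a + j) (a + b)
          ((homogeneousComponent_isHomogeneous a f).mul
            (homogeneousComponent_isHomogeneous j g)), if_neg]
        omega
    · intro i hi hia
      rw [map_sum, Finset.sum_eq_zero]
      intro j hj
      rw [homogComp_of_isHomog _ (i + j) (a + b)
        ((homogeneousComponent_isHomogeneous i f).mul
          (homogeneousComponent_isHomogeneous j g)), if_neg]
      simp only [mem_range] at hi hj
      omega
  by_contra hlt
  push_neg at hlt
  rw [homogeneousComponent_eq_zero _ _ hlt] at key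
  exact mul_ne_zero (topComp_ne_zero f hf) (topComp_ne_zero g hg) key.symm

lemma eq_C_of_totalDegree_eq_zero {p : MP} (hp : p.totalDegree = 0) :
    p = C (coeff 0 p) := by
  rw [totalDegree_eq_zero_iff] at hp
  ext m
  rcases eq_or_ne m 0 with rfl | hm
  · simp
  · rw [coeff_C, if_neg (Ne.symm hm)]
    by_contra hc
    obtain ⟨x, hx⟩ : ∃ x, m x ≠ 0 := by
      by_contra hall; push_neg at hall; exact hm (Finsupp.ext hall)
    exact hx (hp m (mem_support_iff.mpr hc) x)


/-- monomials (i,j) with i+j ≤ m -/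
def T (m : ℕ) : Finset (ℕ × ℕ) := (Finset.range (m+1)).biUnion (fun k => Finset.HasAntidiagonal.antidiagonal k)

lemma mem_T {m : ℕ} {x : ℕ × ℕ} : x ∈ T m ↔ x.1 + x.2 ≤ m := by
  simp only [T, mem_biUnion, mem_range, Finset.HasAntidiagonal.mem_antidiagonal]
  constructor
  · rintro ⟨k, hk, rfl⟩; omega
  · intro h; exact ⟨x.1 + x.2, by omega, rfl⟩

lemma gauss (m : ℕ) : 2 * ∑ x ∈ range (m+1), (x+1) = (m + 1) * (m + 2) := by
  induction m with
  | zero => simp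
  | succ n ih => rw [Finset.sum_range_succ, Nat.mul_add, ih]; ring

def a (m : ℕ) : ℕ := (T m).card

lemma two_mul_a (m : ℕ) : 2 * a m = (m + 1) * (m + 2) := by
  have hd : ∀ x ∈ Finset.range (m+1), ∀ y ∈ Finset.range (m+1), x ≠ y →
      Disjoint (Finset.HasAntidiagonal.antidiagonal x) (Finset.HasAntidiagonal.antidiagonal y) := by
    intro x _ y _ hxy
    simp only [Finset.disjoint_left, Finset.HasAntidiagonal.mem_antidiagonal]
    intro p hp hpy; exact hxy (hp.symm.trans hpy)
  have := Finset.card_biUnion hd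
  rw [a, T, this]
  have h2 : ∀ k ∈ Finset.range (m+1), (Finset.HasAntidiagonal.antidiagonal k).card = k + 1 := by
    intro k _; exact Finset.Nat.card_antidiagonal k
  rw [Finset.sum_congr rfl h2]
  exact gauss m


def keyEquiv (m : ℕ) : {n : Fin 2 →₀ ℕ | (n.sum fun _ e => e) ≤ m} ≃ {x : ℕ × ℕ // x ∈ T m} := by
  refine Equiv.subtypeEquiv ((Finsupp.equivFunOnFinite).trans (finTwoArrowEquiv ℕ)) ?_
  intro n
  simp only [Set.mem_setOf_eq, mem_T, Equiv.trans_apply, finTwoArrowEquiv_apply]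
  rw [Finsupp.sum_fintype _ _ (fun _ => rfl), Fin.sum_univ_two]
  rfl

lemma finrank_B (m : ℕ) : Module.finrank ℝ (B m) = a m := by
  haveI : Fintype {n : Fin 2 →₀ ℕ | (n.sum fun _ e => e) ≤ m} :=
    Fintype.ofEquiv _ (keyEquiv m).symm
  show Module.finrank ℝ (restrictSupport ℝ {n : Fin 2 →₀ ℕ | (n.sum fun _ e => e) ≤ m}) = a m
  rw [Module.finrank_eq_card_basis
    (basisRestrictSupport ℝ {n : Fin 2 →₀ ℕ | (n.sum fun _ e => e) ≤ m})]
  rw [Fintype.card_congr (keyEquiv m)]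
  rw [Fintype.card_coe]
  rfl




lemma aeval_eq_eval' (v : Fin 2 → ℝ) (g : MP) : aeval v g = eval v g := by
  rw [aeval_def, Algebra.algebraMap_self]; rfl

lemma key_bound (P Q : MP) (hp1 : 1 ≤ P.totalDegree) (hq1 : 1 ≤ Q.totalDegree)
    (hrel : IsRelPrime P Q) (F : Finset (ℝ × ℝ))
    (hF : ∀ x ∈ F, eval ![x.1, x.2] P = 0 ∧ eval ![x.1, x.2] Q = 0) :
    F.card ≤ P.totalDegree * Q.totalDegree := by
  have hPne : P ≠ 0 := by rintro rfl; simp at hp1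
  have hQne : Q ≠ 0 := by rintro rfl; simp at hq1
  set p := P.totalDegree with hp
  set q := Q.totalDegree with hq
  set N := F.card with hN
  set d := p + q + N with hd
  -- the multiplication-by-(P,Q) map
  have hfr : ∀ z : ↥(B (q+N)) × ↥(B (p+N)),
      ((z.1 : MP) * P + (z.2 : MP) * Q) ∈ B d := by
    intro z
    apply add_mem
    · rw [mem_restrictTotalDegree]
      refine (totalDegree_mul _ _).trans ?_
      have := (mem_restrictTotalDegree _ _ _).mp z.1.2
      omega
    · rw [mem_restrictTotalDegree]
      refine (totalDegree_mul _ _).trans ?_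
      have := (mem_restrictTotalDegree _ _ _).mp z.2.2
      omega
  set f : ↥(B (q+N)) × ↥(B (p+N)) →ₗ[ℝ] MP :=
    ((LinearMap.mulRight ℝ P) ∘ₗ (B (q+N)).subtype).coprod
      ((LinearMap.mulRight ℝ Q) ∘ₗ (B (p+N)).subtype) with hf_def
  have hf_apply : ∀ z, f z = (z.1 : MP) * P + (z.2 : MP) * Q := fun z => rfl
  set f' : ↥(B (q+N)) × ↥(B (p+N)) →ₗ[ℝ] ↥(B d) :=
    f.codRestrict (B d) (fun z => by rw [hf_apply]; exact hfr z) with hf'_def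
  -- the evaluation map
  set Ev : MP →ₗ[ℝ] (↥F → ℝ) :=
    LinearMap.pi (fun i => (aeval ![(i : ℝ × ℝ).1, (i : ℝ × ℝ).2]).toLinearMap) with hEv_def
  have hEv_apply : ∀ g i, Ev g i = eval ![(i : ℝ × ℝ).1, (i : ℝ × ℝ).2] g :=
    fun g i => aeval_eq_eval' _ g
  set ev' : ↥(B d) →ₗ[ℝ] (↥F → ℝ) := Ev ∘ₗ (B d).subtype with hev'_def
  -- range f' ≤ ker ev'
  have hsub : LinearMap.range f' ≤ LinearMap.ker ev' := by
    rintro x ⟨z, rfl⟩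
    rw [LinearMap.mem_ker]
    funext i
    show Ev ((f' z : MP)) i = 0
    have : (f' z : MP) = f z := rfl
    rw [this, hEv_apply, hf_apply]
    rw [map_add, map_mul, map_mul, (hF i i.2).1, (hF i i.2).2]
    ring
  -- surjectivity of ev'
  have hsurj : ∀ i : ↥F, ∃ g : ↥(B d), ev' g = Pi.single i (1:ℝ) := by
    intro i
    set g₀ : MP := ∏ j ∈ univ.erase i,
      (if (i : ℝ × ℝ).1 ≠ (j : ℝ × ℝ).1 then (X 0 - C (j : ℝ × ℝ).1)
       else (X 1 - C (j : ℝ × ℝ).2)) with hg₀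
    have hdeg : g₀.totalDegree ≤ d := by
      refine le_trans (le_trans (totalDegree_finset_prod _ _)
        (Finset.sum_le_sum (g := fun _ => 1) (fun j _ => ?_))) ?_
      · split_ifs
        · rw [sub_eq_add_neg, ← C_neg]
          exact (totalDegree_add _ _).trans (by simp)
        · rw [sub_eq_add_neg, ← C_neg]
          exact (totalDegree_add _ _).trans (by simp)
      · rw [Finset.sum_const, smul_eq_mul, mul_one]
        have : (univ.erase i).card ≤ Fintype.card ↥F := by
          exact (Finset.card_erase_le).trans (Finset.card_le_univ _)
        rw [Fintype.card_coe] at this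
        omega
    have heval0 : ∀ j : ↥F, j ≠ i → eval ![(j : ℝ × ℝ).1, (j : ℝ × ℝ).2] g₀ = 0 := by
      intro j hj
      rw [hg₀, map_prod]
      refine Finset.prod_eq_zero (Finset.mem_erase.mpr ⟨hj, Finset.mem_univ j⟩) ?_
      split_ifs
      · simp
      · simp
    have hevali : eval ![(i : ℝ × ℝ).1, (i : ℝ × ℝ).2] g₀ ≠ 0 := by
      rw [hg₀, map_prod]
      refine Finset.prod_ne_zero_iff.mpr fun j hj => ?_
      have hji : (j : ℝ × ℝ) ≠ (i : ℝ × ℝ) := by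
        intro h
        exact (Finset.mem_erase.mp hj).1 (Subtype.ext h)
      split_ifs with hxy
      · simp only [map_sub, eval_X, eval_C, Matrix.cons_val_zero]
        exact sub_ne_zero.mpr hxy
      · push_neg at hxy
        simp only [map_sub, eval_X, eval_C, Matrix.cons_val_one, Matrix.head_cons]
        refine sub_ne_zero.mpr fun h2 => hji ?_
        exact Prod.ext hxy.symm h2.symm
    set c := eval ![(i : ℝ × ℝ).1, (i : ℝ × ℝ).2] g₀ with hc
    refine ⟨⟨c⁻¹ • g₀, Submodule.smul_mem _ _ ((mem_restrictTotalDegree _ _ _).mpr hdeg)⟩, ?_⟩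
    funext j
    show Ev (c⁻¹ • g₀) j = _
    rw [hEv_apply, smul_eq_C_mul, map_mul, eval_C]
    rcases eq_or_ne j i with rfl | hji
    · rw [← hc, inv_mul_cancel₀ hevali, Pi.single_eq_same]
    · rw [heval0 j hji, mul_zero, Pi.single_eq_of_ne hji]
  have htop : LinearMap.range ev' = ⊤ := by
    rw [eq_top_iff]
    rintro x -
    have hx : x = ∑ i : ↥F, x i • (Pi.single i (1:ℝ) : ↥F → ℝ) := by
      funext j
      rw [Finset.sum_apply]
      simp [Pi.single_apply]
    rw [hx]
    exact Submodule.sum_mem _ fun i _ =>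
      Submodule.smul_mem _ _ ⟨(hsurj i).choose, (hsurj i).choose_spec⟩
  -- the kernel of f'
  have hmem1 : ∀ w : ↥(B N), (w : MP) * Q ∈ B (q+N) := by
    intro w
    rw [mem_restrictTotalDegree]
    refine (totalDegree_mul _ _).trans ?_
    have := (mem_restrictTotalDegree _ _ _).mp w.2
    omega
  have hmem2 : ∀ w : ↥(B N), (w : MP) * (-P) ∈ B (p+N) := by
    intro w
    rw [mem_restrictTotalDegree]
    refine (totalDegree_mul _ _).trans ?_
    have h1 := (mem_restrictTotalDegree _ _ _).mp w.2
    have h2 : (-P).totalDegree = p := totalDegree_neg P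
    omega
  set ψ : ↥(B N) →ₗ[ℝ] ↥(B (q+N)) × ↥(B (p+N)) :=
    LinearMap.prod
      (((LinearMap.mulRight ℝ Q) ∘ₗ (B N).subtype).codRestrict (B (q+N)) hmem1)
      (((LinearMap.mulRight ℝ (-P)) ∘ₗ (B N).subtype).codRestrict (B (p+N)) hmem2)
    with hψ_def
  have hψ_apply : ∀ w : ↥(B N),
      ((ψ w).1 : MP) = (w : MP) * Q ∧ ((ψ w).2 : MP) = (w : MP) * (-P) := fun w => ⟨rfl, rfl⟩
  have hψinj : Function.Injective ψ := by
    intro w w' h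
    have h1 : (w : MP) * Q = (w' : MP) * Q := by
      have := congrArg (fun z : ↥(B (q+N)) × ↥(B (p+N)) => (z.1 : MP)) h
      simpa [(hψ_apply w).1, (hψ_apply w').1] using this
    exact Subtype.ext (mul_right_cancel₀ hQne h1)
  have hkf : LinearMap.ker f' = LinearMap.range ψ := by
    ext z
    rw [LinearMap.mem_ker, LinearMap.mem_range]
    constructor
    · intro hz
      have hz' : (z.1 : MP) * P + (z.2 : MP) * Q = 0 := by
        have : (f' z : MP) = 0 := by rw [hz]; rfl
        rwa [show (f' z : MP) = f z from rfl, hf_apply] at this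
      have hdvd : Q ∣ (z.1 : MP) := by
        refine hrel.symm.dvd_of_dvd_mul_right (y := (z.1 : MP)) ?_
        exact ⟨-(z.2 : MP), by linear_combination hz'⟩
      obtain ⟨w, hw⟩ := hdvd
      have hwdeg : w.totalDegree ≤ N := by
        rcases eq_or_ne w 0 with rfl | hwne
        · simp
        · have h1 : (z.1 : MP).totalDegree ≤ q + N := (mem_restrictTotalDegree _ _ _).mp z.1.2
          rw [hw, totalDegree_mul_eq hQne hwne] at h1
          omega
      have hv : (z.2 : MP) = w * (-P) := by
        have h2 : Q * (w * P + (z.2 : MP)) = 0 := by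
          rw [mul_add, ← mul_assoc, ← hw]
          linear_combination hz'
        rcases mul_eq_zero.mp h2 with h | h
        · exact absurd h hQne
        · linear_combination h
      refine ⟨⟨w, (mem_restrictTotalDegree _ _ _).mpr hwdeg⟩, ?_⟩
      refine Prod.ext (Subtype.ext ?_) (Subtype.ext ?_)
      · show w * Q = (z.1 : MP)
        rw [hw]; ring
      · show w * (-P) = (z.2 : MP)
        rw [hv]
    · rintro ⟨w, rfl⟩
      apply Subtype.ext
      rw [show (f' (ψ w) : MP) = f (ψ w) from rfl, hf_apply, (hψ_apply w).1, (hψ_apply w).2]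
      show (w : MP) * Q * P + (w : MP) * (-P) * Q = ((0 : ↥(B d)) : MP)
      rw [ZeroMemClass.coe_zero]; ring
  -- rank computations
  have r1 : finrank ℝ (LinearMap.range ev') + finrank ℝ (LinearMap.ker ev')
      = finrank ℝ ↥(B d) := LinearMap.finrank_range_add_finrank_ker ev'
  have r2 : finrank ℝ (LinearMap.range ev') = N := by
    rw [htop, finrank_top, Module.finrank_fintype_fun_eq_card, Fintype.card_coe]
  have r3 : finrank ℝ (LinearMap.range f') + finrank ℝ (LinearMap.ker f')
      = a (q+N) + a (p+N) := by
    rw [LinearMap.finrank_range_add_finrank_ker f', Module.finrank_prod, finrank_B, finrank_B]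
  have r4 : finrank ℝ (LinearMap.ker f') = a N := by
    rw [hkf, LinearMap.finrank_range_of_inj hψinj, finrank_B]
  have r5 : finrank ℝ (LinearMap.range f') ≤ finrank ℝ (LinearMap.ker ev') :=
    Submodule.finrank_mono hsub
  have rB : finrank ℝ ↥(B d) = a d := finrank_B d
  have harith : 2 * a d + 2 * a N = 2 * a (q+N) + 2 * a (p+N) + 2 * (p * q) := by
    rw [two_mul_a, two_mul_a, two_mul_a, two_mul_a, hd]
    ring
  have : N ≤ p * q := by linarith
  exact this



lemma edge_case (P Q : MP)
    (hcop : ∀ R : MP, R ∣ P → R ∣ Q → R.totalDegree = 0)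
    (hP0 : P.totalDegree = 0) (x : ℝ × ℝ) :
    ¬ (eval ![x.1, x.2] P = 0 ∧ eval ![x.1, x.2] Q = 0) := by
  rintro ⟨h1, h2⟩
  have hPC := eq_C_of_totalDegree_eq_zero hP0
  rcases eq_or_ne (coeff 0 P) 0 with hc | hc
  · -- P = 0, so Q must be a nonzero constant
    have hPzero : P = 0 := by rw [hPC, hc, map_zero]
    have hQ0 : Q.totalDegree = 0 := hcop Q (hPzero ▸ dvd_zero Q) dvd_rfl
    have hQC := eq_C_of_totalDegree_eq_zero hQ0
    rcases eq_or_ne (coeff 0 Q) 0 with hc' | hc'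
    · have hQzero : Q = 0 := by rw [hQC, hc', map_zero]
      have := hcop (X 0) (hPzero ▸ dvd_zero _) (hQzero ▸ dvd_zero _)
      rw [totalDegree_X] at this
      exact one_ne_zero this
    · rw [hQC] at h2
      rw [eval_C] at h2
      exact hc' h2
  · rw [hPC, eval_C] at h1
    exact hc h1

theorem statement15' (P Q : MvPolynomial (Fin 2) ℝ)
    (hcop : ∀ R : MvPolynomial (Fin 2) ℝ, R ∣ P → R ∣ Q → R.totalDegree = 0) :
    {x : ℝ × ℝ | MvPolynomial.eval ![x.1, x.2] P = 0 ∧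
        MvPolynomial.eval ![x.1, x.2] Q = 0}.Finite ∧
    {x : ℝ × ℝ | MvPolynomial.eval ![x.1, x.2] P = 0 ∧
        MvPolynomial.eval ![x.1, x.2] Q = 0}.ncard ≤ P.totalDegree * Q.totalDegree := by
  set S := {x : ℝ × ℝ | MvPolynomial.eval ![x.1, x.2] P = 0 ∧
      MvPolynomial.eval ![x.1, x.2] Q = 0} with hS
  rcases eq_or_ne P.totalDegree 0 with hP0 | hP0
  · have : S = ∅ := by
      ext x
      simp only [hS, Set.mem_setOf_eq, Set.mem_empty_iff_false, iff_false]
      exact edge_case P Q hcop hP0 x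
    rw [this]
    exact ⟨Set.finite_empty, by simp⟩
  rcases eq_or_ne Q.totalDegree 0 with hQ0 | hQ0
  · have : S = ∅ := by
      ext x
      simp only [hS, Set.mem_setOf_eq, Set.mem_empty_iff_false, iff_false]
      intro h
      exact edge_case Q P (fun R h1 h2 => hcop R h2 h1) hQ0 x ⟨h.2, h.1⟩
    rw [this]
    exact ⟨Set.finite_empty, by simp⟩
  -- main case
  have hPne : P ≠ 0 := fun h => hP0 (by rw [h, totalDegree_zero])
  have hrel : IsRelPrime P Q := by
    intro R hRP hRQ
    have hR0 := hcop R hRP hRQ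
    have hRC := eq_C_of_totalDegree_eq_zero hR0
    have hRne : R ≠ 0 := fun h => hPne (by simpa [h] using hRP)
    have hcne : coeff 0 R ≠ 0 := fun h => hRne (by rw [hRC, h, map_zero])
    rw [hRC]
    exact IsUnit.map C (isUnit_iff_ne_zero.mpr hcne)
  have key : ∀ F : Finset (ℝ × ℝ), ↑F ⊆ S → F.card ≤ P.totalDegree * Q.totalDegree := by
    intro F hF
    exact key_bound P Q (Nat.one_le_iff_ne_zero.mpr hP0) (Nat.one_le_iff_ne_zero.mpr hQ0)
      hrel F (fun x hx => hF hx)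
  have hfin : S.Finite := by
    by_contra hinf
    obtain ⟨t, hts, htfin, htcard⟩ :=
      Set.Infinite.exists_subset_ncard_eq hinf
        (P.totalDegree * Q.totalDegree + 1)
    have := key htfin.toFinset (by rwa [Set.Finite.coe_toFinset])
    rw [← Set.ncard_eq_toFinset_card t htfin] at this
    omega
  refine ⟨hfin, ?_⟩
  rw [Set.ncard_eq_toFinset_card S hfin]
  exact key hfin.toFinset (by rw [Set.Finite.coe_toFinset])


end

end Stmt15

/-- simplified Bezout theorem — two real plane polynomials without a common
nonconstant factor have at most `deg P · deg Q` common zeros. -/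
theorem statement15 (P Q : MvPolynomial (Fin 2) ℝ)
    (hcop : ∀ R : MvPolynomial (Fin 2) ℝ, R ∣ P → R ∣ Q → R.totalDegree = 0) :
    {x : ℝ × ℝ | MvPolynomial.eval ![x.1, x.2] P = 0 ∧
        MvPolynomial.eval ![x.1, x.2] Q = 0}.Finite ∧
    {x : ℝ × ℝ | MvPolynomial.eval ![x.1, x.2] P = 0 ∧
        MvPolynomial.eval ![x.1, x.2] Q = 0}.ncard ≤ P.totalDegree * Q.totalDegree :=
  Stmt15.statement15' P Q hcop
end
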